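/- Let 1 ≤ m < n be integers, 0 < s ≤ m, and let μ be a compactly supported Borel probability measure on ℝ^n whose support is contained in an s-Ahlfors regular set. Let ν be a compactly supported Borel probability measure on ℝ^n with supp ν ⊆ supp μ and ν absolutely continuous with respect to μ. Let q ≤ 0. Then for ν-almost every x at which liminf_{r→0⁺} [log ν(B(x,r)) − q log μ(B(x,r))]/log r ≤ m(1−q), one has liminf_{r→0⁺} [log ν∗φ_r^m(x) − q log μ∗φ_r^m(x)]/log r = liminf_{r→0⁺} [log ν(B(x,r)) − q log μ(B(x,r))]/log r. -/

import Mathlib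

open MeasureTheory Metric Set Filter
open scoped NNReal ENNReal Topology

/-- The topological support of a measure. -/
def measureSupport {n : ℕ} (μ : Measure (EuclideanSpace ℝ (Fin n))) :
    Set (EuclideanSpace ℝ (Fin n)) :=
  {x | ∀ U : Set (EuclideanSpace ℝ (Fin n)), IsOpen U → x ∈ U → 0 < μ U}

/-- The convolution `μ∗φ_r^m(x) = ∫ min {1, r^m |x-y|^{-m}} dμ(y)`, with the
integrand equal to `1` when `y = x`. -/
noncomputable def convPhi {n : ℕ} (m : ℕ) (μ : Measure (EuclideanSpace ℝ (Fin n)))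
    (x : EuclideanSpace ℝ (Fin n)) (r : ℝ) : ℝ :=
  ∫ y, (if ‖x - y‖ = 0 then 1 else min 1 (r ^ m / ‖x - y‖ ^ m)) ∂μ

/-- A closed set `F ⊆ ℝ^n` is `s`-Ahlfors regular if there are a Borel measure `λ`
and a constant `1 ≤ C < ∞` with `λ F > 0` and `C⁻¹ r^s ≤ λ(B(x,r)) ≤ C r^s` for all
`x ∈ F` and `0 < r ≤ 1`. -/
def IsAhlforsRegular {n : ℕ} (s : ℝ) (F : Set (EuclideanSpace ℝ (Fin n))) : Prop :=
  IsClosed F ∧ ∃ (lam : Measure (EuclideanSpace ℝ (Fin n))) (C : ℝ), 1 ≤ C ∧ 0 < lam F ∧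
    ∀ x ∈ F, ∀ r : ℝ, 0 < r → r ≤ 1 →
      ENNReal.ofReal (C⁻¹ * r ^ s) ≤ lam (ball x r) ∧ lam (ball x r) ≤ ENNReal.ofReal (C * r ^ s)

/-- `liminf_{r → 0⁺} [log ν∗φ_r^m(x) − q log μ∗φ_r^m(x)] / log r`. -/
noncomputable def alphaConv {n : ℕ} (q : ℝ) (m : ℕ)
    (μ ν : Measure (EuclideanSpace ℝ (Fin n))) (x : EuclideanSpace ℝ (Fin n)) : ℝ :=
  Filter.liminf
    (fun r : ℝ =>
      (Real.log (convPhi m ν x r) - q * Real.log (convPhi m μ x r)) / Real.log r)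
    (𝓝[>] (0 : ℝ))

/-- `liminf_{r → 0⁺} [log ν(B(x,r)) − q log μ(B(x,r))] / log r`. -/
noncomputable def alphaBall {n : ℕ} (q : ℝ)
    (μ ν : Measure (EuclideanSpace ℝ (Fin n))) (x : EuclideanSpace ℝ (Fin n)) : ℝ :=
  Filter.liminf
    (fun r : ℝ =>
      (Real.log (ν (ball x r)).toReal - q * Real.log (μ (ball x r)).toReal) / Real.log r)
    (𝓝[>] (0 : ℝ))


/-!
At `ν`-almost every `x`, differentiation of measures (Besicovitch) compares `ν` and `μ` on
balls up to doubling the radius, in both directions, and compares both with Lebesgue measure,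
which gives polynomial lower bounds `μ(B(x,r)), ν(B(x,r)) ≳ r^n`; these keep all the ratios
below bounded, so the `liminf`s are genuine.

Since `φ_r^m ≥ 1_{B(0,r)}` and `q ≤ 0`, the convolution exponent never exceeds the ball
exponent. Conversely, if the ball exponent exceeds `a` with `0 < a < m(1-q)`, the
comparisons turn this into `μ(B(x,r)), ν(B(x,r)) ≲ r^b` with `b = a/(1-q) < m`. The pointwise
estimate `φ_r^m ≤ 1_{B(0,2r)} + 2^{-m} φ_{2r}^m`, iterated, sums these bounds into
`μ∗φ_r^m(x), ν∗φ_r^m(x) ≲ r^b` (a geometric series of ratio `2^{b-m}`), so the convolution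
exponent is at least `a`.
-/

noncomputable def phiKernel {E : Type*} [NormedAddCommGroup E] (m : ℕ) (r : ℝ) (z : E) : ℝ :=
  if ‖z‖ = 0 then 1 else min 1 (r ^ m / ‖z‖ ^ m)

section phiKernel

variable {E : Type*} [NormedAddCommGroup E] {m : ℕ} {r : ℝ} {z : E}

lemma phiKernel_nonneg (hr : 0 ≤ r) : 0 ≤ phiKernel m r z := by
  unfold phiKernel
  split_ifs
  exacts [zero_le_one, le_min zero_le_one (by positivity)]

lemma phiKernel_le_one : phiKernel m r z ≤ 1 := by
  unfold phiKernel
  split_ifs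
  exacts [le_rfl, min_le_left _ _]

lemma phiKernel_of_norm_lt (h : ‖z‖ < r) : phiKernel m r z = 1 := by
  unfold phiKernel
  split_ifs with hz
  · rfl
  · have hz0 : 0 < ‖z‖ := (norm_nonneg z).lt_of_ne' hz
    exact min_eq_left ((one_le_div (by positivity)).2 (pow_le_pow_left₀ hz0.le h.le m))

lemma phiKernel_of_two_mul_le (hr : 0 < r) (h : 2 * r ≤ ‖z‖) :
    phiKernel m r z = (2 ^ m)⁻¹ * phiKernel m (2 * r) z := by
  have hz : 0 < ‖z‖ := by linarith
  have hle : ∀ s, 0 < s → s ≤ ‖z‖ → s ^ m / ‖z‖ ^ m ≤ 1 := fun s hs hsz =>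
    (div_le_one (by positivity)).2 (pow_le_pow_left₀ hs.le hsz m)
  simp only [phiKernel, hz.ne', if_false]
  rw [min_eq_right (hle _ hr (by linarith)), min_eq_right (hle _ (by positivity) h), mul_pow]
  field_simp

variable [MeasurableSpace E] [BorelSpace E]

lemma measurable_phiKernel : Measurable (phiKernel (E := E) m r) :=
  Measurable.ite (measurableSet_eq_fun measurable_norm measurable_const) measurable_const
    (measurable_const.min (measurable_const.div (measurable_norm.pow_const m)))

lemma integrable_phiKernel_sub (μ : Measure E) [IsFiniteMeasure μ] (hr : 0 ≤ r) (x : E) :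
    Integrable (fun y => phiKernel m r (x - y)) μ := by
  refine (integrable_const (1 : ℝ)).mono'
    (measurable_phiKernel.comp (continuous_sub_left x).measurable).aestronglyMeasurable ?_
  filter_upwards with y
  rw [Real.norm_eq_abs, abs_of_nonneg (phiKernel_nonneg hr)]
  exact phiKernel_le_one

end phiKernel

section convPhi

variable {n m : ℕ} {μ : Measure (EuclideanSpace ℝ (Fin n))} {x : EuclideanSpace ℝ (Fin n)} {r : ℝ}

lemma convPhi_eq_integral_phiKernel : convPhi m μ x r = ∫ y, phiKernel m r (x - y) ∂μ := rfl

lemma convPhi_nonneg (hr : 0 ≤ r) : 0 ≤ convPhi m μ x r :=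
  integral_nonneg fun _ => phiKernel_nonneg hr

lemma convPhi_le_one [IsProbabilityMeasure μ] (hr : 0 ≤ r) : convPhi m μ x r ≤ 1 := by
  have := integral_mono (integrable_phiKernel_sub μ hr x) (integrable_const 1)
    fun y => phiKernel_le_one (m := m) (r := r) (z := x - y)
  simpa [convPhi_eq_integral_phiKernel] using this

lemma measureReal_ball_le_convPhi [IsFiniteMeasure μ] (hr : 0 ≤ r) :
    μ.real (ball x r) ≤ convPhi m μ x r := by
  rw [← integral_indicator_one measurableSet_ball, convPhi_eq_integral_phiKernel]
  refine integral_mono ((integrable_const 1).indicator measurableSet_ball)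
    (integrable_phiKernel_sub μ hr x) fun y => ?_
  by_cases hy : y ∈ ball x r
  · rw [indicator_of_mem hy, phiKernel_of_norm_lt (by rwa [← dist_eq_norm, dist_comm])]
    rfl
  · rw [indicator_of_notMem hy]
    exact phiKernel_nonneg hr

lemma convPhi_le_measureReal_ball_add [IsFiniteMeasure μ] (hr : 0 < r) :
    convPhi m μ x r ≤ μ.real (ball x (2 * r)) + (2 ^ m)⁻¹ * convPhi m μ x (2 * r) := by
  have hint := integrable_phiKernel_sub (m := m) μ (by positivity : (0 : ℝ) ≤ 2 * r) x
  have hind : Integrable ((ball x (2 * r)).indicator (1 : EuclideanSpace ℝ (Fin n) → ℝ)) μ :=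
    (integrable_const 1).indicator measurableSet_ball
  rw [← integral_indicator_one measurableSet_ball, convPhi_eq_integral_phiKernel,
    convPhi_eq_integral_phiKernel, ← integral_const_mul, ← integral_add hind (hint.const_mul _)]
  refine integral_mono (integrable_phiKernel_sub μ hr.le x)
    (hind.add (hint.const_mul _)) fun y => ?_
  by_cases hy : y ∈ ball x (2 * r)
  · have : 0 ≤ (2 ^ m)⁻¹ * phiKernel m (2 * r) (x - y) := by
      have := phiKernel_nonneg (m := m) (z := x - y) (by positivity : (0 : ℝ) ≤ 2 * r)
      positivity
    simp only [indicator_of_mem hy, Pi.one_apply]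
    linarith [phiKernel_le_one (m := m) (r := r) (z := x - y)]
  · rw [indicator_of_notMem hy, zero_add]
    rw [mem_ball, dist_eq_norm', not_lt] at hy
    exact (phiKernel_of_two_mul_le hr hy).le

lemma convPhi_le_sum_add_pow [IsProbabilityMeasure μ] (hr : 0 < r) (K : ℕ) :
    convPhi m μ x r ≤
      ∑ k ∈ Finset.range K, ((2 ^ m)⁻¹) ^ k * μ.real (ball x (2 ^ (k + 1) * r)) +
        ((2 ^ m)⁻¹) ^ K := by
  suffices h : convPhi m μ x r ≤
      ∑ k ∈ Finset.range K, ((2 ^ m)⁻¹) ^ k * μ.real (ball x (2 ^ (k + 1) * r)) +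
        ((2 ^ m)⁻¹) ^ K * convPhi m μ x (2 ^ K * r) by
    grw [h, convPhi_le_one (by positivity), mul_one]
  induction K with
  | zero => simp
  | succ K ih =>
    have hstep := convPhi_le_measureReal_ball_add (m := m) (μ := μ) (x := x)
      (by positivity : 0 < 2 ^ K * r)
    rw [← mul_assoc, ← pow_succ'] at hstep
    grw [ih, hstep, Finset.sum_range_succ]
    exact le_of_eq (by ring)

lemma convPhi_le_rpow [IsProbabilityMeasure μ] {b C : ℝ} (hb : 0 ≤ b) (hbm : b < m)
    (hC : ∀ σ, 0 < σ → μ.real (ball x σ) ≤ C * σ ^ b) (hr : 0 < r) :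
    convPhi m μ x r ≤ C * 2 ^ b / (1 - 2 ^ b / 2 ^ m) * r ^ b := by
  set τ : ℝ := 2 ^ b / 2 ^ m
  have hτ0 : 0 ≤ τ := by positivity
  have hτ1 : τ < 1 := by
    rw [div_lt_one (by positivity), ← Real.rpow_natCast]
    exact Real.rpow_lt_rpow_of_exponent_lt one_lt_two hbm
  have hC0 : 0 ≤ C := by simpa using measureReal_nonneg.trans (hC 1 one_pos)
  have hterm : ∀ k : ℕ, ((2 ^ m)⁻¹) ^ k * μ.real (ball x (2 ^ (k + 1) * r)) ≤
      C * 2 ^ b * r ^ b * τ ^ k := fun k => by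
    grw [hC _ (by positivity), Real.mul_rpow (by positivity) hr.le, ← Real.rpow_pow_comm
      zero_le_two, pow_succ, div_pow, inv_pow]
    exact le_of_eq (by ring)
  have hsum : ∀ K, convPhi m μ x r ≤ C * 2 ^ b / (1 - τ) * r ^ b + ((2 ^ m)⁻¹) ^ K := fun K => by
    grw [convPhi_le_sum_add_pow hr K, Finset.sum_le_sum fun k _ => hterm k, ← Finset.mul_sum,
      Finset.range_eq_Ico, geom_sum_Ico_le_of_lt_one hτ0 hτ1]
    apply le_of_eq
    ring
  have hm : (1 : ℝ) < 2 ^ m := one_lt_pow₀ one_lt_two (by exact_mod_cast (hb.trans_lt hbm).ne')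
  refine ge_of_tendsto' (x := atTop) ?_ hsum
  simpa using tendsto_const_nhds.add (tendsto_pow_atTop_nhds_zero_of_lt_one (by positivity)
    (inv_lt_one_of_one_lt₀ hm))

end convPhi

noncomputable def logRatio (q : ℝ) (f g : ℝ → ℝ) (r : ℝ) : ℝ :=
  (Real.log (f r) - q * Real.log (g r)) / Real.log r

lemma tendsto_div_log_nhdsGT_zero (K : ℝ) :
    Tendsto (fun r => K / Real.log r) (𝓝[>] 0) (𝓝 0) :=
  tendsto_const_nhds.div_atBot Real.tendsto_log_nhdsGT_zero

section logRatio

variable {q b C₁ C₂ r : ℝ} {f g f₁ f₂ g₁ g₂ : ℝ → ℝ}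

lemma logRatio_nonneg (hq : q ≤ 0) (hr₀ : 0 < r) (hr₁ : r < 1) (hf₀ : 0 ≤ f r)
    (hf₁ : f r ≤ 1) (hg₀ : 0 ≤ g r) (hg₁ : g r ≤ 1) : 0 ≤ logRatio q f g r := by
  refine div_nonneg_of_nonpos ?_ (Real.log_neg hr₀ hr₁).le
  nlinarith [Real.log_nonpos hf₀ hf₁, Real.log_nonpos hg₀ hg₁]

lemma logRatio_anti (hq : q ≤ 0) (hr₀ : 0 < r) (hr₁ : r < 1) (hf : 0 < f₁ r)
    (hff : f₁ r ≤ f₂ r) (hg : 0 < g₁ r) (hgg : g₁ r ≤ g₂ r) :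
    logRatio q f₂ g₂ r ≤ logRatio q f₁ g₁ r := by
  refine div_le_div_of_nonpos_of_le (Real.log_neg hr₀ hr₁).le ?_
  nlinarith [Real.log_le_log hf hff, Real.log_le_log hg hgg]

lemma le_logRatio_of_le_rpow (hq : q ≤ 0) (hr₀ : 0 < r) (hr₁ : r < 1) (hf : 0 < f r)
    (hfC : f r ≤ C₁ * r ^ b) (hg : 0 < g r) (hgC : g r ≤ C₂ * r ^ b) :
    (1 - q) * b + (Real.log C₁ - q * Real.log C₂) / Real.log r ≤ logRatio q f g r := by
  have hrb : 0 < r ^ b := Real.rpow_pos_of_pos hr₀ b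
  have hlog : ∀ {y C : ℝ}, 0 < y → y ≤ C * r ^ b →
      Real.log y ≤ Real.log C + b * Real.log r := fun {y C} hh hhC => by
    have hC : 0 < C := (mul_pos_iff_of_pos_right hrb).1 (hh.trans_le hhC)
    rw [← Real.log_rpow hr₀, ← Real.log_mul hC.ne' hrb.ne']
    exact Real.log_le_log hh hhC
  have hlogr := Real.log_neg hr₀ hr₁
  rw [logRatio, le_div_iff_of_neg hlogr, add_mul, div_mul_cancel₀ _ hlogr.ne]
  nlinarith [hlog hf hfC, hlog hg hgC]

lemma logRatio_le_of_rpow_le (hq : q ≤ 0) (hr₀ : 0 < r) (hr₁ : r < 1) (hf : 0 < f r)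
    (hfC : r ^ b ≤ C₁ * f r) (hg : 0 < g r) (hgC : r ^ b ≤ C₂ * g r) :
    logRatio q f g r ≤ (1 - q) * b - (Real.log C₁ - q * Real.log C₂) / Real.log r := by
  have hrb : 0 < r ^ b := Real.rpow_pos_of_pos hr₀ b
  have hlog : ∀ {y C : ℝ}, 0 < y → r ^ b ≤ C * y →
      b * Real.log r ≤ Real.log C + Real.log y := fun {y C} hh hhC => by
    have hC : 0 < C := (mul_pos_iff_of_pos_right hh).1 (hrb.trans_le hhC)
    rw [← Real.log_rpow hr₀, ← Real.log_mul hC.ne' hh.ne']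
    exact Real.log_le_log hrb hhC
  have hlogr := Real.log_neg hr₀ hr₁
  rw [logRatio, div_le_iff_of_neg hlogr, sub_mul, div_mul_cancel₀ _ hlogr.ne]
  nlinarith [hlog hf hfC, hlog hg hgC]

lemma eventually_lt_logRatio (hq : q ≤ 0) {c : ℝ} (hc : c < (1 - q) * b)
    (hf : ∀ᶠ r in 𝓝[>] 0, 0 < f r ∧ f r ≤ C₁ * r ^ b)
    (hg : ∀ᶠ r in 𝓝[>] 0, 0 < g r ∧ g r ≤ C₂ * r ^ b) :
    ∀ᶠ r in 𝓝[>] 0, c < logRatio q f g r := by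
  have hlim : Tendsto (fun r => (1 - q) * b + (Real.log C₁ - q * Real.log C₂) / Real.log r)
      (𝓝[>] 0) (𝓝 ((1 - q) * b)) := by
    simpa using tendsto_const_nhds.add (tendsto_div_log_nhdsGT_zero _)
  filter_upwards [hlim.eventually (lt_mem_nhds hc), hf, hg, Ioo_mem_nhdsGT one_pos]
    with r hcr ⟨hf, hfC⟩ ⟨hg, hgC⟩ ⟨hr₀, hr₁⟩
  exact hcr.trans_le (le_logRatio_of_le_rpow hq hr₀ hr₁ hf hfC hg hgC)

lemma eventually_logRatio_lt (hq : q ≤ 0) {c : ℝ} (hc : (1 - q) * b < c)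
    (hf : ∀ᶠ r in 𝓝[>] 0, 0 < f r ∧ r ^ b ≤ C₁ * f r)
    (hg : ∀ᶠ r in 𝓝[>] 0, 0 < g r ∧ r ^ b ≤ C₂ * g r) :
    ∀ᶠ r in 𝓝[>] 0, logRatio q f g r < c := by
  have hlim : Tendsto (fun r => (1 - q) * b - (Real.log C₁ - q * Real.log C₂) / Real.log r)
      (𝓝[>] 0) (𝓝 ((1 - q) * b)) := by
    simpa using tendsto_const_nhds.sub (tendsto_div_log_nhdsGT_zero _)
  filter_upwards [hlim.eventually (gt_mem_nhds hc), hf, hg, Ioo_mem_nhdsGT one_pos]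
    with r hcr ⟨hf, hfC⟩ ⟨hg, hgC⟩ ⟨hr₀, hr₁⟩
  exact (logRatio_le_of_rpow_le hq hr₀ hr₁ hf hfC hg hgC).trans_lt hcr

end logRatio

lemma liminf_eq_of_forall_lt_liminf {α : Type*} {L : Filter α} [L.NeBot] {u v : α → ℝ} {K : ℝ}
    (hv : IsBoundedUnder (· ≥ ·) L v) (hvu : ∀ᶠ x in L, v x ≤ u x) (hu : ∀ᶠ x in L, u x ≤ K)
    (h : ∀ c < liminf u L, ∀ᶠ x in L, c ≤ v x) : liminf v L = liminf u L :=
  le_antisymm (liminf_le_liminf hvu hv (isCoboundedUnder_ge_of_eventually_le L hu))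
    (le_of_forall_lt_imp_le_of_dense fun c hc => le_liminf_of_le
      (isCoboundedUnder_ge_of_eventually_le L ((hvu.and hu).mono fun _ h => h.1.trans h.2))
      (h c hc))

lemma exists_forall_le_rpow_of_eventually {f : ℝ → ℝ} {b C : ℝ} (hf : ∀ r, f r ≤ 1)
    (hb : 0 ≤ b) (h : ∀ᶠ r in 𝓝[>] 0, f r ≤ C * r ^ b) :
    ∃ C', ∀ r, 0 < r → f r ≤ C' * r ^ b := by
  obtain ⟨ρ, hρ, hsub⟩ := mem_nhdsGT_iff_exists_Ioo_subset.1 h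
  have hρb : 0 < ρ ^ b := Real.rpow_pos_of_pos hρ b
  refine ⟨max C (ρ ^ b)⁻¹, fun r hr => ?_⟩
  have hrb : 0 ≤ r ^ b := Real.rpow_nonneg hr.le b
  rcases lt_or_ge r ρ with hrρ | hρr
  · exact (hsub ⟨hr, hrρ⟩).trans (mul_le_mul_of_nonneg_right (le_max_left _ _) hrb)
  · calc f r ≤ (ρ ^ b)⁻¹ * ρ ^ b := (hf r).trans (inv_mul_cancel₀ hρb.ne').ge
      _ ≤ max C (ρ ^ b)⁻¹ * r ^ b := by
        gcongr
        exacts [le_max_right _ _, le_of_lt hρ]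

lemma exists_eventually_le_rpow_of_lt_logRatio {q a C : ℝ} {f g : ℝ → ℝ} (hq : q ≤ 0)
    (hf : ∀ᶠ r in 𝓝[>] 0, 0 < f r) (hg : ∀ᶠ r in 𝓝[>] 0, 0 < g r ∧ g r ≤ g (2 * r))
    (hgf : ∀ᶠ r in 𝓝[>] 0, g r ≤ C * f (2 * r))
    (ha : ∀ᶠ r in 𝓝[>] 0, a < logRatio q f g r) :
    ∃ C', ∀ᶠ r in 𝓝[>] 0, g r ≤ C' * r ^ (a / (1 - q)) := by
  refine ⟨Real.exp ((Real.log C + a * Real.log 2) / (1 - q)), ?_⟩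
  filter_upwards [eventually_nhdsGT_zero_mul_left two_pos ha,
    eventually_nhdsGT_zero_mul_left two_pos hf, hg, hgf,
    Ioo_mem_nhdsGT (by norm_num : (0 : ℝ) < 2⁻¹)]
    with r ha hf ⟨hg, hgg⟩ hgf ⟨hr₀, hr₁⟩
  have hlog : Real.log (2 * r) < 0 := Real.log_neg (by positivity) (by linarith)
  have hC : 0 < C := (mul_pos_iff_of_pos_right hf).1 (hg.trans_le hgf)
  have h₁ : Real.log (g r) ≤ Real.log C + Real.log (f (2 * r)) := by
    rw [← Real.log_mul hC.ne' hf.ne']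
    exact Real.log_le_log hg hgf
  have h₂ := mul_le_mul_of_nonneg_left (Real.log_le_log hg hgg) (neg_nonneg.2 hq)
  have h₃ := (lt_div_iff_of_neg hlog).1 ha
  rw [Real.log_mul two_ne_zero hr₀.ne'] at h₃
  have key : Real.log (g r) ≤
      (Real.log C + a * Real.log 2) / (1 - q) + a / (1 - q) * Real.log r := by
    rw [div_mul_eq_mul_div, ← add_div, le_div_iff₀ (by linarith)]
    linarith
  calc g r = Real.exp (Real.log (g r)) := (Real.exp_log hg).symm
    _ ≤ _ := Real.exp_le_exp.2 key
    _ = _ := by rw [Real.exp_add, Real.rpow_def_of_pos hr₀, mul_comm (Real.log r)]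

def LocallyDominatedAt {X : Type*} [PseudoMetricSpace X] [MeasurableSpace X] (ρ μ : Measure X)
    (x : X) : Prop :=
  ∃ C : ℝ≥0, ∀ᶠ r in 𝓝[>] 0, ρ (ball x r) ≤ C * μ (ball x (2 * r))

theorem ae_locallyDominatedAt {X : Type*} [MetricSpace X] [MeasurableSpace X] [BorelSpace X]
    [SecondCountableTopology X] [HasBesicovitchCovering X] (ρ μ : Measure X)
    [IsLocallyFiniteMeasure ρ] [IsLocallyFiniteMeasure μ] :
    ∀ᵐ x ∂μ, LocallyDominatedAt ρ μ x := by
  filter_upwards [Besicovitch.ae_tendsto_rnDeriv ρ μ, Measure.rnDeriv_lt_top ρ μ] with x hx hfin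
  obtain ⟨C, hlt, -⟩ := ENNReal.lt_iff_exists_nnreal_btwn.1 hfin
  have hC : (C : ℝ≥0∞) ≠ 0 := (pos_of_gt hlt).ne'
  refine ⟨C, ?_⟩
  filter_upwards [hx.eventually (gt_mem_nhds hlt), self_mem_nhdsWithin] with r hr hr₀
  calc ρ (ball x r) ≤ ρ (closedBall x r) := measure_mono ball_subset_closedBall
    _ ≤ C * μ (closedBall x r) :=
      (ENNReal.div_le_iff_le_mul (Or.inr ENNReal.coe_ne_top) (Or.inr hC)).1 hr.le
    _ ≤ C * μ (ball x (2 * r)) := by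
      gcongr
      exact closedBall_subset_ball (by linarith [mem_Ioi.1 hr₀])

namespace LocallyDominatedAt

variable {X : Type*} [PseudoMetricSpace X] [MeasurableSpace X] {ρ μ : Measure X} {x : X}

lemma exists_eventually_measureReal_le [IsFiniteMeasure μ] (h : LocallyDominatedAt ρ μ x) :
    ∃ C : ℝ≥0, ∀ᶠ r in 𝓝[>] 0, ρ.real (ball x r) ≤ C * μ.real (ball x (2 * r)) := by
  obtain ⟨C, hC⟩ := h
  refine ⟨C, hC.mono fun r hr => ?_⟩
  rw [measureReal_def, measureReal_def, ← ENNReal.coe_toReal, ← ENNReal.toReal_mul]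
  exact ENNReal.toReal_mono (by finiteness) hr

lemma exists_eventually_rpow_le {E : Type*} [NormedAddCommGroup E] [NormedSpace ℝ E]
    [FiniteDimensional ℝ E] [MeasurableSpace E] [BorelSpace E] {ℓ μ : Measure E}
    [ℓ.IsAddHaarMeasure] [IsFiniteMeasure μ] {x : E} (h : LocallyDominatedAt ℓ μ x) :
    ∃ C, ∀ᶠ r in 𝓝[>] 0,
      0 < μ.real (ball x r) ∧ r ^ (Module.finrank ℝ E : ℝ) ≤ C * μ.real (ball x r) := by
  obtain ⟨C, hC⟩ := h.exists_eventually_measureReal_le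
  set d := Module.finrank ℝ E
  set v := ℓ.real (ball 0 1)
  have hv : 0 < v := ENNReal.toReal_pos (measure_ball_pos ℓ 0 one_pos).ne' measure_ball_lt_top.ne
  refine ⟨2 ^ d * C / v, ?_⟩
  filter_upwards [eventually_nhdsGT_zero_mul_left (inv_pos.2 two_pos) hC, self_mem_nhdsWithin]
    with r h (hr : 0 < r)
  rw [mul_inv_cancel_left₀ two_ne_zero, measureReal_def,
    Measure.addHaar_ball_of_pos _ _ (by positivity), ENNReal.toReal_mul,
    ENNReal.toReal_ofReal (by positivity), ← measureReal_def, inv_mul_eq_div, div_pow] at h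
  have hle : r ^ d ≤ 2 ^ d * C / v * μ.real (ball x r) := by
    rw [div_mul_eq_mul_div, le_div_iff₀ hv, mul_assoc]
    calc r ^ d * v = 2 ^ d * (r ^ d / 2 ^ d * v) := by field_simp
      _ ≤ _ := by gcongr
  rw [Real.rpow_natCast]
  exact ⟨pos_of_mul_pos_right ((pow_pos hr d).trans_le hle) (by positivity), hle⟩

end LocallyDominatedAt

section Exponents

variable {n m : ℕ} {μ ν : Measure (EuclideanSpace ℝ (Fin n))} {x : EuclideanSpace ℝ (Fin n)}
  {q : ℝ}

lemma alphaBall_eq_liminf_logRatio : alphaBall q μ ν x =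
    liminf (logRatio q (fun r => ν.real (ball x r)) (fun r => μ.real (ball x r))) (𝓝[>] 0) :=
  rfl

lemma alphaConv_eq_liminf_logRatio : alphaConv q m μ ν x =
    liminf (logRatio q (convPhi m ν x) (convPhi m μ x)) (𝓝[>] 0) :=
  rfl

variable [IsProbabilityMeasure μ] [IsProbabilityMeasure ν]

lemma eventually_lt_logRatio_convPhi (hq : q ≤ 0) (hνμ : LocallyDominatedAt ν μ x)
    (hμν : LocallyDominatedAt μ ν x)
    (hpos : ∀ᶠ r in 𝓝[>] 0, 0 < ν.real (ball x r) ∧ 0 < μ.real (ball x r)) {a c : ℝ}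
    (ha₀ : 0 < a) (ham : a < m * (1 - q))
    (ha : ∀ᶠ r in 𝓝[>] 0,
      a < logRatio q (fun r => ν.real (ball x r)) (fun r => μ.real (ball x r)) r)
    (hca : c < a) :
    ∀ᶠ r in 𝓝[>] 0, c < logRatio q (convPhi m ν x) (convPhi m μ x) r := by
  have hq₁ : 0 < 1 - q := by linarith
  set b := a / (1 - q)
  have hb₀ : 0 ≤ b := by positivity
  have hbm : b < m := (div_lt_iff₀ hq₁).2 ham
  obtain ⟨Cνμ, hCνμ⟩ := hνμ.exists_eventually_measureReal_le
  obtain ⟨Cμν, hCμν⟩ := hμν.exists_eventually_measureReal_le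
  obtain ⟨Cμ, hCμ⟩ : ∃ C, ∀ r, 0 < r → μ.real (ball x r) ≤ C * r ^ b := by
    have hmono : ∀ᶠ r in 𝓝[>] 0,
        0 < μ.real (ball x r) ∧ μ.real (ball x r) ≤ μ.real (ball x (2 * r)) := by
      filter_upwards [hpos, self_mem_nhdsWithin] with r h (hr : 0 < r)
      exact ⟨h.2, measureReal_mono (ball_subset_ball (by linarith))⟩
    obtain ⟨C, hC⟩ := exists_eventually_le_rpow_of_lt_logRatio hq (hpos.mono fun _ h => h.1)
      hmono hCμν ha
    exact exists_forall_le_rpow_of_eventually (fun _ => measureReal_le_one) hb₀ hC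
  obtain ⟨Cν, hCν⟩ : ∃ C, ∀ r, 0 < r → ν.real (ball x r) ≤ C * r ^ b := by
    refine exists_forall_le_rpow_of_eventually (fun _ => measureReal_le_one) hb₀
      (C := Cνμ * (Cμ * 2 ^ b)) ?_
    filter_upwards [hCνμ, self_mem_nhdsWithin] with r hr (hr₀ : 0 < r)
    grw [hr, hCμ _ (by positivity), Real.mul_rpow zero_le_two hr₀.le]
    exact le_of_eq (by ring)
  refine eventually_lt_logRatio hq (b := b) (C₁ := Cν * 2 ^ b / (1 - 2 ^ b / 2 ^ m))
    (C₂ := Cμ * 2 ^ b / (1 - 2 ^ b / 2 ^ m)) (by rwa [mul_div_cancel₀ _ hq₁.ne']) ?_ ?_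
  · filter_upwards [hpos, self_mem_nhdsWithin] with r ⟨hν, _⟩ (hr : 0 < r)
    exact ⟨hν.trans_le (measureReal_ball_le_convPhi hr.le), convPhi_le_rpow hb₀ hbm hCν hr⟩
  · filter_upwards [hpos, self_mem_nhdsWithin] with r ⟨_, hμ⟩ (hr : 0 < r)
    exact ⟨hμ.trans_le (measureReal_ball_le_convPhi hr.le), convPhi_le_rpow hb₀ hbm hCμ hr⟩

theorem alphaConv_eq_alphaBall (hq : q ≤ 0) (hνμ : LocallyDominatedAt ν μ x)
    (hμν : LocallyDominatedAt μ ν x) (hν : LocallyDominatedAt volume ν x)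
    (hμ : LocallyDominatedAt volume μ x) (hα : alphaBall q μ ν x ≤ m * (1 - q)) :
    alphaConv q m μ ν x = alphaBall q μ ν x := by
  obtain ⟨Cν, hCν⟩ := hν.exists_eventually_rpow_le
  obtain ⟨Cμ, hCμ⟩ := hμ.exists_eventually_rpow_le
  have hpos : ∀ᶠ r in 𝓝[>] 0, 0 < ν.real (ball x r) ∧ 0 < μ.real (ball x r) :=
    (hCν.and hCμ).mono fun _ h => ⟨h.1.1, h.2.1⟩
  have hsmall : ∀ᶠ r in 𝓝[>] (0 : ℝ), 0 < r ∧ r < 1 := Ioo_mem_nhdsGT one_pos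
  have hle : ∀ᶠ r in 𝓝[>] 0, logRatio q (convPhi m ν x) (convPhi m μ x) r ≤
      logRatio q (fun r => ν.real (ball x r)) (fun r => μ.real (ball x r)) r := by
    filter_upwards [hpos, hsmall] with r ⟨hν, hμ⟩ ⟨hr₀, hr₁⟩
    exact logRatio_anti hq hr₀ hr₁ hν (measureReal_ball_le_convPhi hr₀.le) hμ
      (measureReal_ball_le_convPhi hr₀.le)
  have h₀ : ∀ᶠ r in 𝓝[>] 0, 0 ≤ logRatio q (convPhi m ν x) (convPhi m μ x) r := by
    filter_upwards [hsmall] with r ⟨hr₀, hr₁⟩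
    exact logRatio_nonneg hq hr₀ hr₁ (convPhi_nonneg hr₀.le) (convPhi_le_one hr₀.le)
      (convPhi_nonneg hr₀.le) (convPhi_le_one hr₀.le)
  have hbdd := eventually_logRatio_lt hq (lt_add_one _) hCν hCμ
  rw [alphaBall_eq_liminf_logRatio] at hα ⊢
  rw [alphaConv_eq_liminf_logRatio]
  refine liminf_eq_of_forall_lt_liminf (isBoundedUnder_of_eventually_ge h₀) hle
    (hbdd.mono fun _ => le_of_lt) fun c hc => ?_
  rcases le_or_gt c 0 with hc₀ | hc₀
  · exact h₀.mono fun _ h => hc₀.trans h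
  obtain ⟨a, hca, haA⟩ := exists_between hc
  have ha := eventually_lt_of_lt_liminf haA
    (isBoundedUnder_of_eventually_ge ((h₀.and hle).mono fun _ h => h.1.trans h.2))
  exact (eventually_lt_logRatio_convPhi hq hνμ hμν hpos (hc₀.trans hca) (haA.trans_le hα) ha
    hca).mono fun _ => le_of_lt

end Exponents

theorem stmt_15_general (n m : ℕ)
    (μ : Measure (EuclideanSpace ℝ (Fin n))) [IsProbabilityMeasure μ]
    (ν : Measure (EuclideanSpace ℝ (Fin n))) [IsProbabilityMeasure ν]
    (hac : ν ≪ μ) (q : ℝ) (hq : q ≤ 0) :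
    ∀ᵐ x ∂ν, alphaBall q μ ν x ≤ (m : ℝ) * (1 - q) →
      alphaConv q m μ ν x = alphaBall q μ ν x := by
  filter_upwards [hac.ae_le (ae_locallyDominatedAt ν μ), ae_locallyDominatedAt μ ν,
    ae_locallyDominatedAt volume ν, hac.ae_le (ae_locallyDominatedAt volume μ)]
    with x hνμ hμν hν hμ
  exact alphaConv_eq_alphaBall hq hνμ hμν hν hμ

theorem stmt_15 (n m : ℕ) (hm : 1 ≤ m) (hmn : m < n) (s : ℝ) (hs : 0 < s) (hsm : s ≤ m)
    (μ : Measure (EuclideanSpace ℝ (Fin n))) [IsProbabilityMeasure μ]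
    (hμcompact : IsCompact (measureSupport μ))
    (F : Set (EuclideanSpace ℝ (Fin n))) (hF : IsAhlforsRegular s F)
    (hμsupp : measureSupport μ ⊆ F)
    (ν : Measure (EuclideanSpace ℝ (Fin n))) [IsProbabilityMeasure ν]
    (hνcompact : IsCompact (measureSupport ν))
    (hνsupp : measureSupport ν ⊆ measureSupport μ)
    (hac : ν ≪ μ) (q : ℝ) (hq : q ≤ 0) :
    ∀ᵐ x ∂ν, alphaBall q μ ν x ≤ (m : ℝ) * (1 - q) →
      alphaConv q m μ ν x = alphaBall q μ ν x :=
  stmt_15_general n m μ ν hac q hq
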